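/- For any complex number α, the 8-dimensional algebra M(α) with basis {J,P+,P-,T,X1,X2,X3,X4} and multiplication [J,P+]=iP+, [P+,J]=-iP+, [J,P-]=-iP-, [P-,J]=iP-, [P+,P-]=2iT, [P-,P+]=-2iT, [J,J]=αX2, [X1,J]=iX1, [X4,J]=-iX4, [X1,P+]=X2, [X3,P-]=X1, [X4,P-]=-X2, [X3,T]=(i/2)X2 (other products zero) is a Leibniz algebra; moreover, for any α ≠ 0, M(α) is isomorphic to M(1). -/

import Mathlib

/-- Bracket of the 8-dimensional complex algebra `M(α)` in the basis
`{J, P+, P-, T, X1, X2, X3, X4}` (coordinates indexed `0,…,7`), with nonzero products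
`[J,P+]=iP+`, `[P+,J]=-iP+`, `[J,P-]=-iP-`, `[P-,J]=iP-`, `[P+,P-]=2iT`, `[P-,P+]=-2iT`,
`[J,J]=αX2`, `[X1,J]=iX1`, `[X4,J]=-iX4`, `[X1,P+]=X2`, `[X3,P-]=X1`, `[X4,P-]=-X2`,
`[X3,T]=(i/2)X2`. -/
noncomputable def bracketM (α : ℂ) (u v : Fin 8 → ℂ) : Fin 8 → ℂ :=
  ![0,
    Complex.I * (u 0 * v 1 - u 1 * v 0),
    -Complex.I * (u 0 * v 2 - u 2 * v 0),
    2 * Complex.I * (u 1 * v 2 - u 2 * v 1),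
    Complex.I * (u 4 * v 0) + u 6 * v 2,
    α * (u 0 * v 0) + u 4 * v 1 - u 7 * v 2 + (Complex.I / 2) * (u 6 * v 3),
    0,
    -Complex.I * (u 7 * v 0)]

lemma b0 (α : ℂ) (u v : Fin 8 → ℂ) : bracketM α u v 0 = 0 := rfl
lemma b1 (α : ℂ) (u v : Fin 8 → ℂ) :
    bracketM α u v 1 = Complex.I * (u 0 * v 1 - u 1 * v 0) := rfl
lemma b2 (α : ℂ) (u v : Fin 8 → ℂ) :
    bracketM α u v 2 = -Complex.I * (u 0 * v 2 - u 2 * v 0) := rfl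
lemma b3 (α : ℂ) (u v : Fin 8 → ℂ) :
    bracketM α u v 3 = 2 * Complex.I * (u 1 * v 2 - u 2 * v 1) := rfl
lemma b4 (α : ℂ) (u v : Fin 8 → ℂ) :
    bracketM α u v 4 = Complex.I * (u 4 * v 0) + u 6 * v 2 := rfl
lemma b5 (α : ℂ) (u v : Fin 8 → ℂ) :
    bracketM α u v 5 = α * (u 0 * v 0) + u 4 * v 1 - u 7 * v 2 + (Complex.I / 2) * (u 6 * v 3) := rfl
lemma b6 (α : ℂ) (u v : Fin 8 → ℂ) : bracketM α u v 6 = 0 := rfl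
lemma b7 (α : ℂ) (u v : Fin 8 → ℂ) : bracketM α u v 7 = -Complex.I * (u 7 * v 0) := rfl

/-- Scaling coefficients for the isomorphism `M(α) ≅ M(1)`. -/
noncomputable def cvec (α : ℂ) : Fin 8 → ℂ := ![1, α⁻¹, 1, α⁻¹, 1, α⁻¹, 1, α⁻¹]

lemma c0 (α : ℂ) : cvec α 0 = 1 := rfl
lemma c1 (α : ℂ) : cvec α 1 = α⁻¹ := rfl
lemma c2 (α : ℂ) : cvec α 2 = 1 := rfl
lemma c3 (α : ℂ) : cvec α 3 = α⁻¹ := rfl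
lemma c4 (α : ℂ) : cvec α 4 = 1 := rfl
lemma c5 (α : ℂ) : cvec α 5 = α⁻¹ := rfl
lemma c6 (α : ℂ) : cvec α 6 = 1 := rfl
lemma c7 (α : ℂ) : cvec α 7 = α⁻¹ := rfl

lemma cvec_ne_zero {α : ℂ} (hα : α ≠ 0) (i : Fin 8) : cvec α i ≠ 0 := by
  fin_cases i <;> first | exact one_ne_zero | exact inv_ne_zero hα


lemma ext8 {f g : Fin 8 → ℂ} (h0 : f 0 = g 0) (h1 : f 1 = g 1) (h2 : f 2 = g 2)
    (h3 : f 3 = g 3) (h4 : f 4 = g 4) (h5 : f 5 = g 5) (h6 : f 6 = g 6)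
    (h7 : f 7 = g 7) : f = g := by
  funext i
  fin_cases i <;> assumption

/-- For every `α ∈ ℂ` the algebra `M(α)` is a Leibniz algebra, and for every `α ≠ 0`
it is isomorphic to `M(1)`. -/
theorem bracketM_leibniz_and_iso :
    (∀ (α : ℂ) (x y z : Fin 8 → ℂ),
      bracketM α x (bracketM α y z)
        = bracketM α (bracketM α x y) z - bracketM α (bracketM α x z) y) ∧
    (∀ α : ℂ, α ≠ 0 → ∃ f : (Fin 8 → ℂ) ≃ₗ[ℂ] (Fin 8 → ℂ),
      ∀ u v : Fin 8 → ℂ, f (bracketM α u v) = bracketM 1 (f u) (f v)) := by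
  constructor
  · intro α x y z
    refine ext8 ?_ ?_ ?_ ?_ ?_ ?_ ?_ ?_ <;>
      simp only [Pi.sub_apply, b0, b1, b2, b3, b4, b5, b6, b7] <;>
      first
        | ring1
        | linear_combination (x 6 * (y 1 * z 2 - z 1 * y 2)) * Complex.I_sq
  · intro α hα
    refine ⟨{ toFun := fun u i => cvec α i * u i
              invFun := fun u i => (cvec α i)⁻¹ * u i
              map_add' := by intro u v; funext i; simp [Pi.add_apply]; ring
              map_smul' := by intro c u; funext i; simp [Pi.smul_apply]; ring
              left_inv := by
                intro u; funext i
                field_simp [cvec_ne_zero hα i]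
              right_inv := by
                intro u; funext i
                field_simp [cvec_ne_zero hα i] }, ?_⟩
    intro u v
    refine ext8 ?_ ?_ ?_ ?_ ?_ ?_ ?_ ?_ <;>
      simp only [LinearEquiv.coe_mk, LinearMap.coe_mk, AddHom.coe_mk, Equiv.coe_fn_mk, b0, b1, b2, b3, b4, b5, b6, b7,
        c0, c1, c2, c3, c4, c5, c6, c7, mul_zero, one_mul] <;>
      field_simp <;> ring
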